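/- Let n ≥ 2 and let F : (ℳⁿ)ⁿ → ℝ be a nonnegative function which is additive in each variable and which satisfies F(A₁,…,Aₙ) = 0 whenever two of its arguments are proportional matrices of rank one. Then F is symmetric in any pair of rank-one arguments: for all s, t ∈ ℝⁿ, all indices i ≠ j, and all A_k ∈ ℳⁿ (k ≠ i,j), the value of F on the tuple with i-th entry s sᵀ and j-th entry t tᵀ equals the value of F on the tuple with i-th entry t tᵀ and j-th entry s sᵀ (all other entries unchanged). -/

import Mathlib

/-!
Freeze all arguments of `F` except the `i`-th and the `j`-th and call the resulting function
`G(X, Y)`. For fixed `x`, the map `y ↦ G(x xᵀ, y yᵀ)` is nonnegative, satisfies the parallelogram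
law (by additivity, since `(y+z)(y+z)ᵀ + (y-z)(y-z)ᵀ = 2 y yᵀ + 2 z zᵀ`) and vanishes at `x`.
Hence `k ↦ G(x xᵀ, (y + k x)(y + k x)ᵀ)` is a nonnegative affine function on `ℤ`, so it is
constant: the second slot is invariant under translation by `x`, and likewise the first. Then
`G(s sᵀ, t tᵀ) = G((s+t)(s+t)ᵀ, t tᵀ) = G((s+t)(s+t)ᵀ, s sᵀ) = G(t tᵀ, s sᵀ)`.
-/

open Matrix Function

namespace Matrix

theorem rank_eq_zero_iff {K m n : Type*} [Field K] [Fintype n] [DecidableEq n] [Fintype m]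
    {A : Matrix m n K} : A.rank = 0 ↔ A = 0 := by
  rw [rank, Submodule.finrank_eq_zero, LinearMap.range_eq_bot, ← toLin'_apply']
  exact LinearEquiv.map_eq_zero_iff _

theorem rank_vecMulVec_of_ne_zero {K m : Type*} [Field K] [Fintype m]
    {w v : m → K} (hw : w ≠ 0) (hv : v ≠ 0) : (vecMulVec w v).rank = 1 := by
  classical
  refine le_antisymm (rank_vecMulVec_le w v) (Nat.one_le_iff_ne_zero.2 fun h => ?_)
  exact vecMulVec_ne_zero hw hv (rank_eq_zero_iff.1 h)

theorem vecMulVec_add_add_vecMulVec_sub {R m : Type*} [Ring R] (y z : m → R) :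
    vecMulVec (y + z) (y + z) + vecMulVec (y - z) (y - z) =
      (vecMulVec y y + vecMulVec z z) + (vecMulVec y y + vecMulVec z z) := by
  ext a b
  simp only [add_apply, vecMulVec_apply, Pi.add_apply, Pi.sub_apply]
  noncomm_ring

theorem posSemidef_vecMulVec_self {m : Type*} [Finite m] (x : m → ℝ) :
    (vecMulVec x x).PosSemidef :=
  posSemidef_vecMulVec_self_star x

end Matrix

theorem Int.apply_eq_apply_zero_of_nonneg_of_midpoint {f : ℤ → ℝ}
    (hmid : ∀ k, f (k + 1) + f (k - 1) = 2 * f k) (hnn : ∀ k, 0 ≤ f k) (k : ℤ) :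
    f k = f 0 := by
  set d := f 1 - f 0
  have hstep : ∀ k, f (k + 1) = f k + d := by
    intro k
    induction k using Int.induction_on with
    | zero => simp [d]
    | succ m ih =>
      have h := hmid (m + 1)
      rw [add_sub_cancel_right] at h
      linarith
    | pred m ih =>
      have h := hmid (-m)
      rw [sub_add_cancel]
      linarith
  have haffine : ∀ k : ℤ, f k = f 0 + k * d := by
    intro k
    induction k using Int.induction_on with
    | zero => simp
    | succ m ih =>
      push_cast at ih ⊢
      linarith [hstep m]
    | pred m ih =>
      have h := hstep (-m - 1)
      rw [sub_add_cancel] at h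
      push_cast at ih ⊢
      linarith
  have hbound : ∀ m : ℕ, m * |d| ≤ f 0 := by
    intro m
    have h₁ := haffine m
    have h₂ := haffine (-m)
    push_cast at h₁ h₂
    cases abs_cases d <;> nlinarith [hnn m, hnn (-m)]
  have hd : d = 0 := by
    by_contra hne
    obtain ⟨m, hm⟩ := exists_nat_gt (f 0 / |d|)
    have := hbound m
    rw [div_lt_iff₀ (abs_pos.2 hne)] at hm
    linarith
  rw [haffine k, hd, mul_zero, add_zero]

theorem map_add_eq_of_parallelogram {V : Type*} [AddCommGroup V] {q : V → ℝ}
    (hpar : ∀ y z, q (y + z) + q (y - z) = 2 * q y + 2 * q z) (hnn : ∀ y, 0 ≤ q y)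
    {x : V} (hx : q x = 0) (y : V) : q (y + x) = q y := by
  have hmid : ∀ k : ℤ, q (y + (k + 1) • x) + q (y + (k - 1) • x) = 2 * q (y + k • x) := by
    intro k
    have h := hpar (y + k • x) x
    rwa [hx, mul_zero, add_zero, add_assoc, ← add_one_zsmul, add_sub_assoc, sub_eq_add_neg,
      ← sub_one_zsmul] at h
  simpa using Int.apply_eq_apply_zero_of_nonneg_of_midpoint (f := fun k => q (y + k • x)) hmid
    (fun _ => hnn _) 1

section Biadditive

variable {m : Type*} [Fintype m]

theorem parallelogram_of_additive_on_posSemidef {φ : Matrix m m ℝ → ℝ}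
    (hadd : ∀ A B, A.PosSemidef → B.PosSemidef → φ (A + B) = φ A + φ B) (y z : m → ℝ) :
    φ (vecMulVec (y + z) (y + z)) + φ (vecMulVec (y - z) (y - z)) =
      2 * φ (vecMulVec y y) + 2 * φ (vecMulVec z z) := by
  have hyz := (posSemidef_vecMulVec_self y).add (posSemidef_vecMulVec_self z)
  rw [← hadd _ _ (posSemidef_vecMulVec_self _) (posSemidef_vecMulVec_self _),
    vecMulVec_add_add_vecMulVec_sub, hadd _ _ hyz hyz,
    hadd _ _ (posSemidef_vecMulVec_self y) (posSemidef_vecMulVec_self z)]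
  ring

theorem map_vecMulVec_add_eq {φ : Matrix m m ℝ → ℝ}
    (hadd : ∀ A B, A.PosSemidef → B.PosSemidef → φ (A + B) = φ A + φ B)
    (hnn : ∀ A, A.PosSemidef → 0 ≤ φ A) {x : m → ℝ} (hx : φ (vecMulVec x x) = 0) (y : m → ℝ) :
    φ (vecMulVec (y + x) (y + x)) = φ (vecMulVec y y) :=
  map_add_eq_of_parallelogram (q := fun y => φ (vecMulVec y y))
    (parallelogram_of_additive_on_posSemidef hadd) (fun _ => hnn _ (posSemidef_vecMulVec_self _))
    hx y

theorem symm_on_vecMulVec_of_biadditive {G : Matrix m m ℝ → Matrix m m ℝ → ℝ}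
    (hadd_left : ∀ Y, Y.PosSemidef → ∀ A B, A.PosSemidef → B.PosSemidef →
      G (A + B) Y = G A Y + G B Y)
    (hadd_right : ∀ X, X.PosSemidef → ∀ A B, A.PosSemidef → B.PosSemidef →
      G X (A + B) = G X A + G X B)
    (hnn : ∀ X Y, X.PosSemidef → Y.PosSemidef → 0 ≤ G X Y)
    (hdiag : ∀ x, G (vecMulVec x x) (vecMulVec x x) = 0) (s t : m → ℝ) :
    G (vecMulVec s s) (vecMulVec t t) = G (vecMulVec t t) (vecMulVec s s) := by
  have left : ∀ x y, G (vecMulVec (y + x) (y + x)) (vecMulVec x x) =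
      G (vecMulVec y y) (vecMulVec x x) := fun x =>
    map_vecMulVec_add_eq (hadd_left _ (posSemidef_vecMulVec_self x))
      (fun _ hA => hnn _ _ hA (posSemidef_vecMulVec_self x)) (hdiag x)
  have right : ∀ x y, G (vecMulVec x x) (vecMulVec (y + x) (y + x)) =
      G (vecMulVec x x) (vecMulVec y y) := fun x =>
    map_vecMulVec_add_eq (hadd_right _ (posSemidef_vecMulVec_self x))
      (fun _ hA => hnn _ _ (posSemidef_vecMulVec_self x) hA) (hdiag x)
  calc G (vecMulVec s s) (vecMulVec t t)
      = G (vecMulVec (s + t) (s + t)) (vecMulVec t t) := (left t s).symm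
    _ = G (vecMulVec (s + t) (s + t)) (vecMulVec (-s + (s + t)) (-s + (s + t))) := by
      rw [neg_add_cancel_left]
    _ = G (vecMulVec (s + t) (s + t)) (vecMulVec s s) := by
      rw [right, neg_vecMulVec, vecMulVec_neg, neg_neg]
    _ = G (vecMulVec t t) (vecMulVec s s) := by rw [add_comm, left]

end Biadditive

section Slots

variable {ι m : Type*} [DecidableEq ι] {F : (ι → Matrix m m ℝ) → ℝ}
  {A : ι → Matrix m m ℝ} {i : ι} {X X' : Matrix m m ℝ}

theorem posSemidef_update (hA : ∀ k, (A k).PosSemidef) (hX : X.PosSemidef) (k : ι) :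
    (update A i X k).PosSemidef := by
  rcases eq_or_ne k i with rfl | hk
  · simpa using hX
  · simpa [hk] using hA k

theorem apply_update_add
    (hadd : ∀ (A : ι → Matrix m m ℝ) (i : ι) (B : Matrix m m ℝ), (∀ j, (A j).PosSemidef) →
      B.PosSemidef → F (update A i (A i + B)) = F A + F (update A i B))
    (hA : ∀ k, (A k).PosSemidef) (hX : X.PosSemidef) (hX' : X'.PosSemidef) :
    F (update A i (X + X')) = F (update A i X) + F (update A i X') := by
  simpa using hadd (update A i X) i X' (posSemidef_update hA hX) hX'

theorem apply_update_zero
    (hadd : ∀ (A : ι → Matrix m m ℝ) (i : ι) (B : Matrix m m ℝ), (∀ j, (A j).PosSemidef) →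
      B.PosSemidef → F (update A i (A i + B)) = F A + F (update A i B))
    (hA : ∀ k, (A k).PosSemidef) : F (update A i 0) = 0 := by
  have h := apply_update_add (i := i) hadd hA PosSemidef.zero PosSemidef.zero
  rw [add_zero] at h
  linarith

end Slots

theorem F_symm_on_segments {n : ℕ}
    (F : (Fin n → Matrix (Fin n) (Fin n) ℝ) → ℝ)
    (hnonneg : ∀ A : Fin n → Matrix (Fin n) (Fin n) ℝ,
      (∀ j, (A j).PosSemidef) → 0 ≤ F A)
    (hadd : ∀ (A : Fin n → Matrix (Fin n) (Fin n) ℝ) (i : Fin n)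
      (B : Matrix (Fin n) (Fin n) ℝ), (∀ j, (A j).PosSemidef) → B.PosSemidef →
      F (Function.update A i (A i + B)) = F A + F (Function.update A i B))
    (hvanish : ∀ A : Fin n → Matrix (Fin n) (Fin n) ℝ,
      (∀ j, (A j).PosSemidef) →
      (∃ i j, i ≠ j ∧ (A i).rank = 1 ∧ (A j).rank = 1 ∧
        ∃ c : ℝ, 0 < c ∧ A i = c • A j) →
      F A = 0) :
    ∀ (s t : Fin n → ℝ) (i j : Fin n), i ≠ j →
      ∀ A : Fin n → Matrix (Fin n) (Fin n) ℝ, (∀ k, (A k).PosSemidef) →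
      F (Function.update (Function.update A i (Matrix.vecMulVec s s)) j
          (Matrix.vecMulVec t t)) =
      F (Function.update (Function.update A i (Matrix.vecMulVec t t)) j
          (Matrix.vecMulVec s s)) := by
  intro s t i j hij A hA
  refine symm_on_vecMulVec_of_biadditive (G := fun X Y => F (update (update A i X) j Y))
    ?_ ?_ ?_ ?_ s t
  · intro Y hY X X' hX hX'
    simp only [update_comm hij]
    exact apply_update_add hadd (posSemidef_update hA hY) hX hX'
  · intro X hX Y Y' hY hY'
    exact apply_update_add hadd (posSemidef_update hA hX) hY hY'
  · intro X Y hX hY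
    exact hnonneg _ (posSemidef_update (posSemidef_update hA hX) hY)
  · intro x
    rcases eq_or_ne x 0 with rfl | hx
    · simpa using apply_update_zero hadd (posSemidef_update hA PosSemidef.zero)
    · refine hvanish _ (posSemidef_update (posSemidef_update hA (posSemidef_vecMulVec_self x))
        (posSemidef_vecMulVec_self x)) ⟨i, j, hij, ?_, ?_, 1, one_pos, ?_⟩ <;>
        simp [update_of_ne hij, rank_vecMulVec_of_ne_zero hx hx]
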